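/- Two LPMLN programs P and Q are semi-strongly equivalent under the soft stable model semantics (i.e., SSM(P ∪ R) = SSM(Q ∪ R) for every LPMLN program R) if and only if P and Q have the same soft SE-models. -/

import Mathlib

open scoped Classical

noncomputable section

namespace LPMLN

/-- A ground literal: an atom (numbered by `ℕ`) or its classical negation. -/
inductive Lit where
  | pos : ℕ → Lit
  | neg : ℕ → Lit
deriving DecidableEq

/-- The complementary literal. -/
def Lit.compl : Lit → Lit
  | .pos a => .neg a
  | .neg a => .pos a

/-- A finite set of literals is consistent if it contains no complementary pair. -/
def Consistent (I : Finset Lit) : Prop := ∀ l ∈ I, l.compl ∉ I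

/-- An ASP rule, given by its head, positive body and negative body. -/
structure Rule where
  head : Finset Lit
  pos : Finset Lit
  neg : Finset Lit
deriving DecidableEq

/-- The literals occurring in a rule. -/
def Rule.lits (r : Rule) : Finset Lit := r.head ∪ r.pos ∪ r.neg

/-- Satisfaction of a rule by a set of literals. -/
def Sat (I : Finset Lit) (r : Rule) : Prop :=
  r.pos ⊆ I → r.neg ∩ I = ∅ → (r.head ∩ I).Nonempty

/-- Satisfaction of an ASP program. -/
def SatProg (I : Finset Lit) (prog : Finset Rule) : Prop := ∀ r ∈ prog, Sat I r

/-- The GL-reduct of an ASP program w.r.t. an interpretation. -/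
def glReduct (prog : Finset Rule) (I : Finset Lit) : Finset Rule :=
  (prog.filter fun r => r.neg ∩ I = ∅).image fun r => ⟨r.head, r.pos, ∅⟩

/-- `I` is a stable model of the ASP program `prog`: `I` is a consistent set of
literals satisfying the GL-reduct, no proper subset of which satisfies the GL-reduct. -/
def AspStable (prog : Finset Rule) (I : Finset Lit) : Prop :=
  Consistent I ∧ SatProg I (glReduct prog I) ∧ ∀ J ⊂ I, ¬ SatProg J (glReduct prog I)

/-- A weight: a real number (soft rule) or the symbol `α` (hard rule). -/
inductive Weight where
  | soft : ℝ → Weight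
  | hard : Weight

/-- The real value of a soft weight (hard weights get the dummy value 0). -/
def Weight.val : Weight → ℝ
  | .soft w => w
  | .hard => 0

/-- A weighted rule `w : r`. -/
structure WRule where
  w : Weight
  r : Rule

/-- An LPMLN program: a finite set of weighted rules. -/
abbrev Program := Finset WRule

/-- The LPMLN reduct `P_I`: the rules of `P` satisfied by `I`. -/
def reduct (P : Program) (I : Finset Lit) : Program := P.filter fun wr => Sat I wr.r

/-- The unweighted ASP counterpart of an LPMLN program. -/
def unweighted (P : Program) : Finset Rule := P.image fun wr => wr.r

/-- `I` is a stable model of the LPMLN program `P`: `I` is a stable model of the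
unweighted ASP counterpart of the LPMLN reduct `P_I`. -/
def Stable (P : Program) (I : Finset Lit) : Prop :=
  AspStable (unweighted (reduct P I)) I

/-- The literals occurring in an LPMLN program. -/
def litset (P : Program) : Finset Lit := P.biUnion fun wr => wr.r.lits

/-- `(X, Y)` is an SE-interpretation: a pair of interpretations with `X ⊆ Y`. -/
def SEInterp (X Y : Finset Lit) : Prop := Consistent X ∧ Consistent Y ∧ X ⊆ Y

/-- `(X, Y)` is an SE-model of the LPMLN program `P`: an SE-interpretation such that
`X` satisfies the GL-reduct (w.r.t. `Y`) of the unweighted version of `P_Y`. -/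
def SEModel (P : Program) (X Y : Finset Lit) : Prop :=
  SEInterp X Y ∧ SatProg X (glReduct (unweighted (reduct P Y)) Y)

/-- The number of hard rules of `P` satisfied by `I`. -/
def hardCount (P : Program) (I : Finset Lit) : ℕ :=
  ((reduct P I).filter fun wr => wr.w = Weight.hard).card

/-- The sum of the weights of the soft rules of `P` satisfied by `I`. -/
def softWeight (P : Program) (I : Finset Lit) : ℝ :=
  ∑ wr ∈ ((reduct P I).filter fun wr => wr.w ≠ Weight.hard), wr.w.val

/-- The weight degree `W(P, I) = exp(Σ_{w:r ∈ P_I} w)`, viewed as the real-valued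
function `A ↦ exp(c' + k'·A)` of the value `A` given to the symbol `α`, where `k'` is
the number of hard rules of `P` satisfied by `I` and `c'` the sum of the weights of the
soft rules of `P` satisfied by `I`. -/
def wdeg (P : Program) (I : Finset Lit) (A : ℝ) : ℝ :=
  Real.exp (softWeight P I + A * hardCount P I)

/-- The (finite) set of stable models of `P` (every stable model of `P` is a subset of
`litset P`). -/
def SMset (P : Program) : Finset (Finset Lit) :=
  (litset P).powerset.filter fun I => Stable P I

/-- The probability degree `Pr(P, I)`: the limit, as `α → ∞`, of
`W(P, I) / Σ_{I' ∈ SM(P)} W(P, I')` if `I` is a stable model of `P`, and `0` otherwise. -/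
def PrDeg (P : Program) (I : Finset Lit) : ℝ :=
  if Stable P I then
    Filter.limUnder Filter.atTop fun A => wdeg P I A / ∑ I' ∈ SMset P, wdeg P I' A
  else 0

/-- `I` is a probabilistic stable model of `P`: a stable model of `P` satisfying the
maximum number of hard rules of `P` (equivalently, with nonzero probability degree). -/
def PStable (P : Program) (I : Finset Lit) : Prop :=
  Stable P I ∧ ∀ J, Stable P J → hardCount P J ≤ hardCount P I

/-- Semi-strong equivalence: the extensions by any LPMLN program have the same
stable models. -/
def SemiStrongEq (P Q : Program) : Prop :=
  ∀ R : Program, ∀ I, Stable (P ∪ R) I ↔ Stable (Q ∪ R) I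

/-- p-ordinary equivalence: same stable models and same probability degrees. -/
def POrdEq (P Q : Program) : Prop :=
  (∀ I, Stable P I ↔ Stable Q I) ∧ ∀ I, Stable P I → PrDeg P I = PrDeg Q I

/-- p-strong equivalence: p-ordinary equivalence under every extension. -/
def PStrongEq (P Q : Program) : Prop := ∀ R : Program, POrdEq (P ∪ R) (Q ∪ R)

/-- Comparison of the symbolic weight degrees of two interpretations w.r.t. `P`:
`exp(c + k·α) ≤ exp(c' + k'·α)` iff `k < k'`, or `k = k'` and `c ≤ c'`. -/
def WLe (P : Program) (I J : Finset Lit) : Prop :=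
  hardCount P I < hardCount P J ∨
    (hardCount P I = hardCount P J ∧ softWeight P I ≤ softWeight P J)

/-- q-strong equivalence: same stable models under every extension, with
order-preserving weight degrees. -/
def QStrongEq (P Q : Program) : Prop :=
  ∀ R : Program,
    (∀ I, Stable (P ∪ R) I ↔ Stable (Q ∪ R) I) ∧
    ∀ X Y, Stable (P ∪ R) X → Stable (P ∪ R) Y → (WLe (P ∪ R) X Y ↔ WLe (Q ∪ R) X Y)

/-- A soft stable model of `P`: a stable model of `P` satisfying all hard rules of `P`. -/
def SoftStable (P : Program) (I : Finset Lit) : Prop :=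
  Stable P I ∧ ∀ wr ∈ P, wr.w = Weight.hard → Sat I wr.r

/-- A soft SE-model of `P`: an SE-model `(X, Y)` of `P` such that `Y` satisfies all
hard rules of `P`. -/
def SoftSEModel (P : Program) (X Y : Finset Lit) : Prop :=
  SEModel P X Y ∧ ∀ wr ∈ P, wr.w = Weight.hard → Sat Y wr.r

/-- The (finite) set of soft stable models of `P`. -/
def SSMset (P : Program) : Finset (Finset Lit) :=
  (litset P).powerset.filter fun I => SoftStable P I

/-- The probability degree under the soft stable model semantics:
`Pr_s(P, X) = W_s(P, X) / Σ_{X' ∈ SSM(P)} W_s(P, X')`, where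
`W_s(P, X) = exp(Σ_{w:r ∈ P^s, X ⊨ r} w)`. -/
def PrS (P : Program) (X : Finset Lit) : ℝ :=
  Real.exp (softWeight P X) / ∑ X' ∈ SSMset P, Real.exp (softWeight P X')

/-- sp-strong equivalence: p-strong equivalence under the soft stable model
semantics. -/
def SPStrongEq (P Q : Program) : Prop :=
  ∀ R : Program,
    (∀ I, SoftStable (P ∪ R) I ↔ SoftStable (Q ∪ R) I) ∧
    ∀ X, SoftStable (P ∪ R) X → PrS (P ∪ R) X = PrS (Q ∪ R) X

/-- `(X, Y)` is a UE-model of `P`: an SE-model with `X = Y`, or with `X ⊊ Y` such that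
no `X'` strictly between `X` and `Y` gives an SE-model `(X', Y)`. -/
def UEModel (P : Program) (X Y : Finset Lit) : Prop :=
  SEModel P X Y ∧
    (X = Y ∨ (X ⊂ Y ∧ ∀ X', X ⊂ X' → X' ⊂ Y → ¬ SEModel P X' Y))

/-- A program consisting of weighted facts only (rules with empty bodies). -/
def IsFactProg (R : Program) : Prop := ∀ wr ∈ R, wr.r.pos = ∅ ∧ wr.r.neg = ∅

/-- p-uniform equivalence: p-ordinary equivalence under every extension by a set of
weighted facts. -/
def PUniformEq (P Q : Program) : Prop :=
  ∀ R : Program, IsFactProg R → POrdEq (P ∪ R) (Q ∪ R)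

/-- The flattening rules `R(X, Y, a)`: the two hard rules
`α : ← X, not Y, a` and `α : a ← X, not Y`. -/
def flatten (X Y : Finset Lit) (a : ℕ) : Program :=
  {⟨Weight.hard, ⟨∅, X ∪ {Lit.pos a}, Y⟩⟩, ⟨Weight.hard, ⟨{Lit.pos a}, X, Y⟩⟩}

/-- The hard fact `α : l`. -/
def factOf (l : Lit) : WRule := ⟨Weight.hard, ⟨{l}, ∅, ∅⟩⟩

/-- The base flattening extension `E⁰(P, U) = P ∪ {α : a | a ∈ U}`. -/
def E0 (P : Program) (U : Finset Lit) : Program := P ∪ U.image factOf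

/-- `IsFlatExt P U k E` holds iff `E` is a flattening extension `E^k(P, U)`:
`E⁰(P, U) = P ∪ {α : a | a ∈ U}` and `E^{i+1}(P, U) = E^i(P, U) ∪ R(X ∩ U, U − X, c)`
where `X` is a probabilistic stable model of `E^i(P, U)` and `c` is a fresh atom. -/
inductive IsFlatExt (P : Program) (U : Finset Lit) : ℕ → Program → Prop
  | zero : IsFlatExt P U 0 (E0 P U)
  | succ {i : ℕ} {E : Program} {X : Finset Lit} {c : ℕ} :
      IsFlatExt P U i E → PStable E X →
      Lit.pos c ∉ litset E → Lit.neg c ∉ litset E →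
      IsFlatExt P U (i + 1) (E ∪ flatten (X ∩ U) (U \ X) c)

/-!
Stable models are determined by SE-models: `I` is a soft stable model of `P` iff `(I, I)` is
a soft SE-model of `P` and no `(J, I)` with `J ⊊ I` is one, and the soft SE-models of `P ∪ R`
are those common to `P` and `R`. This gives the "if" direction.

For "only if", let `(X, Y)` be a soft SE-model of `P`. Adding the soft facts `Y` makes `Y` a
soft stable model of `P`, hence of `Q`, so `Y` satisfies the hard rules of `Q`. If `(X, Y)`
were not an SE-model of `Q`, add the soft facts `X` and the rules `p ← q` for
`p, q ∈ Y \ X`: the only SE-models `(J, Y)` of these are `J = X` and `J = Y`, so `Y` becomes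
a soft stable model of `Q`, but not of `P`, which has the SE-model `(X, Y)`.
-/

end LPMLN

section SetLemmas

variable {α : Type*} [DecidableEq α]

lemma Finset.singleton_inter_nonempty {a : α} {s : Finset α} : ({a} ∩ s).Nonempty ↔ a ∈ s := by
  simp only [← Finset.coe_nonempty, Finset.coe_inter, Finset.coe_singleton,
    Set.singleton_inter_nonempty, Finset.mem_coe]

lemma Finset.subset_and_sdiff_closed_iff {X J Y : Finset α} (hXY : X ⊆ Y) (hJY : J ⊆ Y) :
    (X ⊆ J ∧ ∀ p ∈ Y \ X, ∀ q ∈ Y \ X, q ∈ J → p ∈ J) ↔ J = X ∨ J = Y := by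
  constructor
  · rintro ⟨hXJ, hclosed⟩
    by_cases hmeet : ∃ q ∈ Y \ X, q ∈ J
    · obtain ⟨q, hq, hqJ⟩ := hmeet
      refine Or.inr (hJY.antisymm fun l hl => ?_)
      by_cases hlX : l ∈ X
      · exact hXJ hlX
      · exact hclosed l (Finset.mem_sdiff.mpr ⟨hl, hlX⟩) q hq hqJ
    · refine Or.inl (Finset.Subset.antisymm (fun l hl => ?_) hXJ)
      by_contra hlX
      exact hmeet ⟨l, Finset.mem_sdiff.mpr ⟨hJY hl, hlX⟩, hl⟩
  · rintro (rfl | rfl)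
    · exact ⟨subset_rfl, fun _ _ q hq hqJ => absurd hqJ (Finset.mem_sdiff.mp hq).2⟩
    · exact ⟨hXY, fun p hp _ _ _ => (Finset.mem_sdiff.mp hp).1⟩

end SetLemmas

namespace LPMLN

lemma Consistent.subset {X Y : Finset Lit} (hY : Consistent Y) (h : X ⊆ Y) : Consistent X :=
  fun l hl hc => hY l (h hl) (h hc)

lemma satProg_union {I : Finset Lit} {A B : Finset Rule} :
    SatProg I (A ∪ B) ↔ SatProg I A ∧ SatProg I B := by
  simp only [SatProg, Finset.mem_union, or_imp, forall_and]

lemma satProg_glReduct_iff {P : Program} {X Y : Finset Lit} :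
    SatProg X (glReduct (unweighted (reduct P Y)) Y) ↔
      ∀ wr ∈ P, Sat Y wr.r → wr.r.neg ∩ Y = ∅ → wr.r.pos ⊆ X →
        (wr.r.head ∩ X).Nonempty := by
  simp only [SatProg, glReduct, unweighted, reduct, Finset.mem_image, Finset.mem_filter]
  constructor
  · intro h wr hwr hsat hneg hpos
    exact h ⟨wr.r.head, wr.r.pos, ∅⟩ ⟨wr.r, ⟨⟨wr, ⟨hwr, hsat⟩, rfl⟩, hneg⟩, rfl⟩ hpos
      (Finset.empty_inter X)
  · rintro h _ ⟨_, ⟨⟨wr, ⟨hwr, hsat⟩, rfl⟩, hneg⟩, rfl⟩ hpos -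
    exact h wr hwr hsat hneg hpos

lemma glReduct_union (P R : Program) (Y : Finset Lit) :
    glReduct (unweighted (reduct (P ∪ R) Y)) Y =
      glReduct (unweighted (reduct P Y)) Y ∪ glReduct (unweighted (reduct R Y)) Y := by
  simp only [glReduct, unweighted, reduct, Finset.filter_union, Finset.image_union]

lemma seModel_self_iff {P : Program} {Y : Finset Lit} : SEModel P Y Y ↔ Consistent Y :=
  ⟨fun h => h.1.1, fun hY => ⟨⟨hY, hY, subset_rfl⟩,
    satProg_glReduct_iff.mpr fun _ _ hsat hneg hpos => hsat hpos hneg⟩⟩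

lemma seModel_union {P R : Program} {X Y : Finset Lit} :
    SEModel (P ∪ R) X Y ↔ SEModel P X Y ∧ SEModel R X Y := by
  simp only [SEModel, glReduct_union, satProg_union]
  tauto

lemma softSEModel_union {P R : Program} {X Y : Finset Lit} :
    SoftSEModel (P ∪ R) X Y ↔ SoftSEModel P X Y ∧ SoftSEModel R X Y := by
  simp only [SoftSEModel, seModel_union, Finset.mem_union, or_imp, forall_and]
  tauto

lemma softSEModel_iff_seModel_of_soft {R : Program} (hR : ∀ wr ∈ R, wr.w ≠ Weight.hard)
    {X Y : Finset Lit} : SoftSEModel R X Y ↔ SEModel R X Y :=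
  ⟨And.left, fun h => ⟨h, fun wr hwr hh => absurd hh (hR wr hwr)⟩⟩

lemma stable_iff_seModel {P : Program} {I : Finset Lit} :
    Stable P I ↔ SEModel P I I ∧ ∀ J ⊂ I, ¬ SEModel P J I := by
  constructor
  · rintro ⟨hI, hsat, hmin⟩
    exact ⟨⟨⟨hI, hI, subset_rfl⟩, hsat⟩, fun J hJ hJI => hmin J hJ hJI.2⟩
  · rintro ⟨⟨⟨hI, -, -⟩, hsat⟩, hmin⟩
    exact ⟨hI, hsat, fun J hJ hJsat =>
      hmin J hJ ⟨⟨hI.subset hJ.subset, hI, hJ.subset⟩, hJsat⟩⟩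

lemma softStable_iff_softSEModel {P : Program} {I : Finset Lit} :
    SoftStable P I ↔ SoftSEModel P I I ∧ ∀ J ⊂ I, ¬ SoftSEModel P J I := by
  rw [SoftStable, stable_iff_seModel]
  constructor
  · rintro ⟨⟨hII, hmin⟩, hhard⟩
    exact ⟨⟨hII, hhard⟩, fun J hJ hJI => hmin J hJ hJI.1⟩
  · rintro ⟨⟨hII, hhard⟩, hmin⟩
    exact ⟨⟨hII, fun J hJ hJI => hmin J hJ ⟨hJI, hhard⟩⟩, hhard⟩

lemma softStable_congr {P Q : Program} (h : ∀ X Y, SoftSEModel P X Y ↔ SoftSEModel Q X Y)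
    (I : Finset Lit) : SoftStable P I ↔ SoftStable Q I := by
  simp only [softStable_iff_softSEModel, h]

lemma softSEModel_self_of_softStable_union {P R : Program} {Y : Finset Lit}
    (h : SoftStable (P ∪ R) Y) : SoftSEModel P Y Y :=
  (softSEModel_union.mp (softStable_iff_softSEModel.mp h).1).1

def softFacts (S : Finset Lit) : Program :=
  S.image fun l => ⟨Weight.soft 0, ⟨{l}, ∅, ∅⟩⟩

def softEquivs (S : Finset Lit) : Program :=
  (S ×ˢ S).image fun pq => ⟨Weight.soft 0, ⟨{pq.1}, {pq.2}, ∅⟩⟩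

lemma softFacts_soft (S : Finset Lit) : ∀ wr ∈ softFacts S, wr.w ≠ Weight.hard := by
  rintro _ hwr
  obtain ⟨l, -, rfl⟩ := Finset.mem_image.mp hwr
  exact Weight.noConfusion

lemma softEquivs_soft (S : Finset Lit) : ∀ wr ∈ softEquivs S, wr.w ≠ Weight.hard := by
  rintro _ hwr
  obtain ⟨pq, -, rfl⟩ := Finset.mem_image.mp hwr
  exact Weight.noConfusion

lemma satProg_glReduct_softFacts_iff {S J Y : Finset Lit} (hSY : S ⊆ Y) :
    SatProg J (glReduct (unweighted (reduct (softFacts S) Y)) Y) ↔ S ⊆ J := by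
  simp only [satProg_glReduct_iff, softFacts, Finset.forall_mem_image, Sat,
    Finset.singleton_inter_nonempty, Finset.empty_subset, Finset.empty_inter, forall_const]
  exact forall₂_congr fun l hl => by simp only [hSY hl, forall_const]

lemma satProg_glReduct_softEquivs_iff {S J Y : Finset Lit} (hSY : S ⊆ Y) :
    SatProg J (glReduct (unweighted (reduct (softEquivs S) Y)) Y) ↔
      ∀ p ∈ S, ∀ q ∈ S, q ∈ J → p ∈ J := by
  simp only [satProg_glReduct_iff, softEquivs, Finset.forall_mem_image, Finset.mem_product,
    Prod.forall, and_imp, Sat, Finset.singleton_inter_nonempty, Finset.singleton_subset_iff,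
    Finset.empty_inter, forall_const]
  exact ⟨fun h p hp q hq => h p q hp hq fun _ => hSY hp, fun h p q hp hq _ => h p hp q hq⟩

def cutProg (X Y : Finset Lit) : Program := softFacts X ∪ softEquivs (Y \ X)

lemma softSEModel_cutProg_iff {X J Y : Finset Lit} (hXY : X ⊆ Y) :
    SoftSEModel (cutProg X Y) J Y ↔ SEInterp J Y ∧ (J = X ∨ J = Y) := by
  have hsoft : ∀ wr ∈ cutProg X Y, wr.w ≠ Weight.hard := by
    simpa only [cutProg, Finset.mem_union, or_imp, forall_and] using
      ⟨softFacts_soft X, softEquivs_soft (Y \ X)⟩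
  rw [softSEModel_iff_seModel_of_soft hsoft, SEModel, cutProg, glReduct_union, satProg_union,
    satProg_glReduct_softFacts_iff hXY, satProg_glReduct_softEquivs_iff Finset.sdiff_subset]
  exact ⟨fun ⟨hJ, hcut⟩ => ⟨hJ, (Finset.subset_and_sdiff_closed_iff hXY hJ.2.2).mp hcut⟩,
    fun ⟨hJ, hcut⟩ => ⟨hJ, (Finset.subset_and_sdiff_closed_iff hXY hJ.2.2).mpr hcut⟩⟩

lemma softStable_union_softFacts_self {P : Program} {Y : Finset Lit}
    (hY : SoftSEModel P Y Y) : SoftStable (P ∪ softFacts Y) Y := by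
  refine softStable_iff_softSEModel.mpr ⟨softSEModel_union.mpr ⟨hY, ?_⟩, ?_⟩
  · rw [softSEModel_iff_seModel_of_soft (softFacts_soft Y)]
    exact seModel_self_iff.mpr hY.1.1.1
  · intro J hJ hJY
    rw [softSEModel_union, softSEModel_iff_seModel_of_soft (softFacts_soft Y), SEModel,
      satProg_glReduct_softFacts_iff subset_rfl] at hJY
    exact hJ.2 hJY.2.2

lemma softStable_union_cutProg {Q : Program} {X Y : Finset Lit} (hY : SoftSEModel Q Y Y)
    (hXY : X ⊆ Y) (hX : ¬ SoftSEModel Q X Y) : SoftStable (Q ∪ cutProg X Y) Y := by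
  refine softStable_iff_softSEModel.mpr ⟨softSEModel_union.mpr ⟨hY, ?_⟩, ?_⟩
  · exact (softSEModel_cutProg_iff hXY).mpr ⟨hY.1.1, Or.inr rfl⟩
  · intro J hJ hJY
    obtain ⟨hQ, hcut⟩ := softSEModel_union.mp hJY
    rcases ((softSEModel_cutProg_iff hXY).mp hcut).2 with rfl | rfl
    · exact hX hQ
    · exact hJ.ne rfl

lemma not_softStable_union_cutProg {P : Program} {X Y : Finset Lit}
    (hX : SoftSEModel P X Y) (hXY : X ⊂ Y) : ¬ SoftStable (P ∪ cutProg X Y) Y := by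
  intro h
  refine (softStable_iff_softSEModel.mp h).2 X hXY (softSEModel_union.mpr ⟨hX, ?_⟩)
  exact (softSEModel_cutProg_iff hXY.subset).mpr ⟨hX.1.1, Or.inl rfl⟩

lemma softSEModel_of_softStable_union_iff {P Q : Program}
    (h : ∀ R : Program, ∀ I, SoftStable (P ∪ R) I ↔ SoftStable (Q ∪ R) I)
    {X Y : Finset Lit} (hXY : SoftSEModel P X Y) : SoftSEModel Q X Y := by
  have hPY : SoftSEModel P Y Y := ⟨seModel_self_iff.mpr hXY.1.1.2.1, hXY.2⟩
  have hQY : SoftSEModel Q Y Y :=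
    softSEModel_self_of_softStable_union ((h _ Y).mp (softStable_union_softFacts_self hPY))
  by_contra hQX
  obtain rfl | hss := hXY.1.1.2.2.eq_or_ssubset
  · exact hQX hQY
  · exact not_softStable_union_cutProg hXY hss
      ((h _ Y).mpr (softStable_union_cutProg hQY hss.subset hQX))

/-- Two LPMLN programs `P` and `Q` are semi-strongly equivalent under the
soft stable model semantics (i.e., `SSM(P ∪ R) = SSM(Q ∪ R)` for every LPMLN program
`R`) if and only if `P` and `Q` have the same soft SE-models. -/
theorem semiStrongEq_ssm_iff_same_softSEModels (P Q : Program) :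
    (∀ R : Program, ∀ I, SoftStable (P ∪ R) I ↔ SoftStable (Q ∪ R) I) ↔
      (∀ X Y, SoftSEModel P X Y ↔ SoftSEModel Q X Y) := by
  constructor
  · intro h X Y
    exact ⟨softSEModel_of_softStable_union_iff h,
      softSEModel_of_softStable_union_iff fun R I => (h R I).symm⟩
  · intro h R
    exact softStable_congr fun X Y => by simp only [softSEModel_union, h]

end LPMLN
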